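/- arXiv:1809.10508 — 2 statements merged into one kernel-verified Lean document; each statement's English description precedes it below -/
import Mathlib

section
/- Let H be a gated set of vertices of a median graph G of dimension d, with fibers F(x) for x ∈ H. Two fibers F(x) and F(y) are neighboring (i.e., some edge of G joins a vertex of F(x) to a vertex of F(y)) if and only if x and y are adjacent in G. Moreover, if F(x) and F(y) are neighboring, then the boundary ∂_y F(x) = {x' ∈ F(x) : x' has a neighbor in F(y)} is a gated set that induces a subgraph of dimension at most d − 1 (it contains no induced d-dimensional hypercube). -/
open SimpleGraph Set

/-- The metric interval `I(u,v)` in a graph `G`. -/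
def gInterval {V : Type*} (G : SimpleGraph V) (u v : V) : Set V :=
  {w | G.dist u w + G.dist w v = G.dist u v}

/-- A median graph: a connected graph in which every triplet of vertices has a
unique median, i.e. a unique vertex in `I(x,y) ∩ I(y,z) ∩ I(z,x)`. -/
def MedianGraph {V : Type*} (G : SimpleGraph V) : Prop :=
  G.Connected ∧ ∀ x y z : V,
    ∃! m : V, m ∈ gInterval G x y ∧ m ∈ gInterval G y z ∧ m ∈ gInterval G z x

/-- `G` contains an induced `d`-dimensional hypercube all of whose vertices lie in `S`. -/
def HasCubeIn {V : Type*} (G : SimpleGraph V) (d : ℕ) (S : Set V) : Prop :=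
  ∃ f : Finset (Fin d) → V, Function.Injective f ∧ (∀ A, f A ∈ S) ∧
    ∀ A B : Finset (Fin d), G.Adj (f A) (f B) ↔ (symmDiff A B).card = 1

/-- `G` contains an induced `d`-dimensional hypercube `Q_d`. -/
def HasInducedCube {V : Type*} (G : SimpleGraph V) (d : ℕ) : Prop :=
  HasCubeIn G d Set.univ

/-- A cube-free (median) graph: no induced 3-dimensional hypercube. -/
def CubeFree {V : Type*} (G : SimpleGraph V) : Prop :=
  ¬ HasInducedCube G 3

/-- `g` is a gate of `v` in the set `S`. -/
def IsGate {V : Type*} (G : SimpleGraph V) (S : Set V) (v g : V) : Prop :=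
  g ∈ S ∧ ∀ u ∈ S, G.dist v u = G.dist v g + G.dist g u

/-- A set of vertices is gated if every vertex has a gate in it. -/
def Gated {V : Type*} (G : SimpleGraph V) (S : Set V) : Prop :=
  ∀ v : V, ∃ g : V, IsGate G S v g

/-- A set of vertices is convex if it contains the interval between any two of its members. -/
def GConvex {V : Type*} (G : SimpleGraph V) (S : Set V) : Prop :=
  ∀ u ∈ S, ∀ v ∈ S, gInterval G u v ⊆ S

/-- The star `St(z)`: the set of vertices lying in some induced hypercube of `G`
containing `z`. -/
def gStar {V : Type*} (G : SimpleGraph V) (z : V) : Set V :=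
  {v | ∃ (d : ℕ) (f : Finset (Fin d) → V), Function.Injective f ∧
      (∀ A B : Finset (Fin d), G.Adj (f A) (f B) ↔ (symmDiff A B).card = 1) ∧
      (∃ A, f A = z) ∧ (∃ A, f A = v)}

/-- The fiber `F(x)` of `x` with respect to a (gated) set `H`: all vertices having `x`
as their gate in `H`. -/
def fiber {V : Type*} (G : SimpleGraph V) (H : Set V) (x : V) : Set V :=
  {v | IsGate G H v x}

/-- Two fibers are neighboring when an edge of `G` joins them. -/
def Neighboring {V : Type*} (G : SimpleGraph V) (H : Set V) (x y : V) : Prop :=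
  ∃ a ∈ fiber G H x, ∃ b ∈ fiber G H y, G.Adj a b

/-- The boundary `∂_y F(x)`: vertices of `F(x)` having a neighbor in `F(y)`. -/
def bdry {V : Type*} (G : SimpleGraph V) (H : Set V) (x y : V) : Set V :=
  {a | a ∈ fiber G H x ∧ ∃ b ∈ fiber G H y, G.Adj a b}

/-- The total boundary `∂*F(x)`: union of the boundaries `∂_y F(x)` over all `y ∈ H`
adjacent to `x`. -/
def totalBdry {V : Type*} (G : SimpleGraph V) (H : Set V) (x : V) : Set V :=
  ⋃ (y : V) (_ : y ∈ H ∧ G.Adj x y), bdry G H x y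

/-- The imprint set of `u` on `A`. -/
def imprints {V : Type*} (G : SimpleGraph V) (u : V) (A : Set V) : Set V :=
  {a ∈ A | gInterval G u a ∩ A = {a}}

/-- The halfspace `W(u,v)` associated with an edge `uv`. -/
def halfspaceW {V : Type*} (G : SimpleGraph V) (u v : V) : Set V :=
  {z | G.dist z u < G.dist z v}


/-!
In a median graph an edge `xy` splits the vertices into the convex halfspaces `W(x,y)` and
`W(y,x)`, and every edge `ub` with `u ∈ W(x,y)`, `b ∈ W(y,x)` induces the same split: push `ub`
towards `xy` through the squares given by the quadrangle condition. The fiber `F(x)` of a gated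
set lies in `W(x,u)` for every neighbour `u ∈ H` of `x`, which makes fibers convex; the edges
between `F(x)` and `F(y)` then form a distance-preserving matching. Hence `∂_y F(x)` is convex,
thus gated, and a `d`-cube in it together with its matched copy in `F(y)` would span a
`(d+1)`-cube.
-/

namespace SimpleGraph

variable {V : Type*} {G : SimpleGraph V}

lemma Adj.dist_le_add_one {a b : V} (hab : G.Adj a b) (z : V) :
    G.dist z b ≤ G.dist z a + 1 := by
  simpa [dist_eq_one_iff_adj.mpr hab] using hab.reachable.dist_triangle_right z

lemma exists_adj_dist_eq_of_dist_eq_add_one {u v : V} {n : ℕ} (h : G.dist u v = n + 1) :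
    ∃ w, G.Adj u w ∧ G.dist w v = n := by
  obtain ⟨p, hp⟩ := exists_walk_of_dist_ne_zero (show G.dist u v ≠ 0 by omega)
  cases p with
  | nil => simp at h
  | cons hadj q =>
    refine ⟨_, hadj, le_antisymm ?_ ?_⟩
    · have := dist_le q
      simp only [Walk.length_cons] at hp
      omega
    · have := hadj.symm.dist_le_add_one v
      rw [dist_comm (u := v), dist_comm (u := v)] at this
      omega

lemma Connected.exists_adj_mem_not_mem (hc : G.Connected) {S : Set V} {u z : V}
    (hu : u ∈ S) (hz : z ∉ S) :
    ∃ p q, G.Adj p q ∧ p ∈ S ∧ q ∉ S ∧ G.dist u p + 1 + G.dist q z = G.dist u z := by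
  obtain ⟨n, hn⟩ : ∃ n, G.dist u z = n := ⟨_, rfl⟩
  induction n generalizing u with
  | zero => exact absurd ((hc.dist_eq_zero_iff.mp hn) ▸ hu) hz
  | succ n ih =>
    obtain ⟨w, huw, hwz⟩ := exists_adj_dist_eq_of_dist_eq_add_one hn
    by_cases hw : w ∈ S
    · obtain ⟨p, q, hpq, hp, hq, hpqz⟩ := ih hw hwz
      refine ⟨p, q, hpq, hp, hq, le_antisymm ?_ ?_⟩
      · have := huw.symm.dist_le_add_one p
        rw [dist_comm (u := p), dist_comm (u := p)] at this
        omega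
      · have h1 := hc.dist_triangle (u := u) (v := p) (w := z)
        have h2 := hpq.symm.dist_le_add_one z
        rw [dist_comm (u := z), dist_comm (u := z)] at h2
        omega
    · exact ⟨u, w, huw, hu, hw, by simp [hwz, hn, Nat.add_comm]⟩

end SimpleGraph

lemma mem_halfspaceW {V : Type*} {G : SimpleGraph V} {u v z : V} :
    z ∈ halfspaceW G u v ↔ G.dist z u < G.dist z v := Iff.rfl

namespace MedianGraph

variable {V : Type*} {G : SimpleGraph V}

lemma exists_median (hG : MedianGraph G) (a b c : V) :
    ∃ m, G.dist a m + G.dist m b = G.dist a b ∧ G.dist b m + G.dist m c = G.dist b c ∧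
      G.dist c m + G.dist m a = G.dist c a := by
  obtain ⟨m, hm, -⟩ := hG.2 a b c
  exact ⟨m, hm⟩

lemma median_unique (hG : MedianGraph G) {a b c m m' : V}
    (h₁ : G.dist a m + G.dist m b = G.dist a b) (h₂ : G.dist b m + G.dist m c = G.dist b c)
    (h₃ : G.dist c m + G.dist m a = G.dist c a)
    (h₁' : G.dist a m' + G.dist m' b = G.dist a b)
    (h₂' : G.dist b m' + G.dist m' c = G.dist b c)
    (h₃' : G.dist c m' + G.dist m' a = G.dist c a) : m = m' :=
  (hG.2 a b c).unique ⟨h₁, h₂, h₃⟩ ⟨h₁', h₂', h₃'⟩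

lemma dist_ne_of_adj (hG : MedianGraph G) {a b : V} (hab : G.Adj a b) (z : V) :
    G.dist z a ≠ G.dist z b := by
  obtain ⟨m, h₁, h₂, h₃⟩ := hG.exists_median a b z
  have := dist_eq_one_iff_adj.mpr hab
  have := G.dist_comm (u := z) (v := a)
  have := G.dist_comm (u := z) (v := b)
  have := G.dist_comm (u := a) (v := b)
  rcases Nat.eq_zero_or_pos (G.dist a m) with ham | ham
  · rw [← hG.1.dist_eq_zero_iff.mp ham] at h₂
    omega
  · rw [hG.1.dist_eq_zero_iff.mp (show G.dist m b = 0 by omega)] at h₃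
    omega

lemma dist_eq_add_one_or_of_adj (hG : MedianGraph G) {a b : V} (hab : G.Adj a b) (z : V) :
    G.dist z b = G.dist z a + 1 ∨ G.dist z a = G.dist z b + 1 := by
  have := hab.dist_le_add_one z
  have := hab.symm.dist_le_add_one z
  have := hG.dist_ne_of_adj hab z
  omega

lemma dist_eq_add_one_or_of_adj' (hG : MedianGraph G) {a b : V} (hab : G.Adj a b) (z : V) :
    G.dist b z = G.dist a z + 1 ∨ G.dist a z = G.dist b z + 1 := by
  rw [G.dist_comm (u := a), G.dist_comm (u := b)]
  exact hG.dist_eq_add_one_or_of_adj hab z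

lemma dist_eq_add_one_of_mem_halfspaceW (hG : MedianGraph G) {a b z : V} (hab : G.Adj a b)
    (hz : z ∈ halfspaceW G a b) : G.dist z b = G.dist z a + 1 := by
  rw [mem_halfspaceW] at hz
  rcases hG.dist_eq_add_one_or_of_adj hab z with h | h <;> omega

lemma mem_halfspaceW_swap (hG : MedianGraph G) {a b z : V} (hab : G.Adj a b)
    (hz : z ∉ halfspaceW G a b) : z ∈ halfspaceW G b a := by
  rw [mem_halfspaceW] at hz ⊢
  have := hG.dist_ne_of_adj hab z
  omega

lemma dist_eq_two (hG : MedianGraph G) {u v w z : V} (huv : u ≠ v) (hu : G.Adj u w)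
    (hv : G.Adj w v) (hz : G.dist z u = G.dist z v) : G.dist u v = 2 := by
  have := hG.1.dist_triangle (u := u) (v := w) (w := v)
  rw [dist_eq_one_iff_adj.mpr hu, dist_eq_one_iff_adj.mpr hv] at this
  have := hG.1.pos_dist_of_ne huv
  have : G.dist u v ≠ 1 := fun h ↦ hG.dist_ne_of_adj (dist_eq_one_iff_adj.mp h) z hz
  omega

/-- The quadrangle condition. -/
lemma exists_adj_adj_dist_lt (hG : MedianGraph G) {u v w z : V} (huv : u ≠ v)
    (hu : G.Adj u w) (hv : G.Adj v w) (hz : G.dist u z = G.dist v z) :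
    ∃ t, G.Adj u t ∧ G.Adj v t ∧ G.dist t z + 1 = G.dist u z := by
  have := G.dist_comm (u := z) (v := u)
  have := G.dist_comm (u := z) (v := v)
  have huv₂ := hG.dist_eq_two huv hu hv.symm (z := z) (by omega)
  obtain ⟨m, h₁, h₂, h₃⟩ := hG.exists_median u v z
  have := G.dist_comm (u := u) (v := v)
  have hum : G.dist u m ≠ 0 := fun h ↦ by
    rw [← hG.1.dist_eq_zero_iff.mp h] at h₂
    omega
  have hmv : G.dist m v ≠ 0 := fun h ↦ by
    rw [hG.1.dist_eq_zero_iff.mp h] at h₃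
    omega
  have := G.dist_comm (u := m) (v := u)
  have := G.dist_comm (u := m) (v := v)
  have := G.dist_comm (u := m) (v := z)
  exact ⟨m, dist_eq_one_iff_adj.mp (by omega), dist_eq_one_iff_adj.mp (by omega), by omega⟩

lemma halfspaceW_subset_of_square (hG : MedianGraph G) {a b c d : V} (hab : G.Adj a b)
    (hbc : G.Adj b c) (hcd : G.Adj c d) (hda : G.Adj d a) (hac : a ≠ c) (hbd : b ≠ d) :
    halfspaceW G a d ⊆ halfspaceW G b c := by
  intro p hp
  by_contra hpbc
  have hpd := hG.dist_eq_add_one_of_mem_halfspaceW hda.symm hp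
  have hpb := hG.dist_eq_add_one_of_mem_halfspaceW hbc.symm (hG.mem_halfspaceW_swap hbc hpbc)
  have hpc : G.dist p c = G.dist p a := by
    rcases hG.dist_eq_add_one_or_of_adj hab p with h | h <;>
      rcases hG.dist_eq_add_one_or_of_adj hcd p with h' | h' <;> omega
  have hdb := hG.dist_eq_two hbd.symm hda hab (z := p) (by omega)
  -- both `a` and `c` are medians of `d`, `b` and `p`
  have e₁ := dist_eq_one_iff_adj.mpr hab
  have e₂ := dist_eq_one_iff_adj.mpr hbc
  have e₃ := dist_eq_one_iff_adj.mpr hcd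
  have e₄ := dist_eq_one_iff_adj.mpr hda
  have := G.dist_comm (u := a) (v := b)
  have := G.dist_comm (u := b) (v := c)
  have := G.dist_comm (u := a) (v := p)
  have := G.dist_comm (u := c) (v := p)
  have := G.dist_comm (u := b) (v := p)
  have := G.dist_comm (u := a) (v := d)
  have := G.dist_comm (u := c) (v := d)
  exact hac (hG.median_unique (a := d) (b := b) (c := p) (by omega) (by omega) (by omega)
    (by omega) (by omega) (by omega))

lemma halfspaceW_subset (hG : MedianGraph G) {x y u b : V} (hxy : G.Adj x y)
    (hub : G.Adj u b) (hu : u ∈ halfspaceW G x y) (hb : b ∈ halfspaceW G y x) :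
    halfspaceW G x y ⊆ halfspaceW G u b := by
  obtain ⟨n, hn⟩ : ∃ n, G.dist u x = n := ⟨_, rfl⟩
  induction n generalizing u b with
  | zero =>
    obtain rfl := hG.1.dist_eq_zero_iff.mp hn
    have hby : G.dist b y = 0 := by
      have := dist_eq_one_iff_adj.mpr hub.symm
      rw [mem_halfspaceW] at hb
      omega
    rw [hG.1.dist_eq_zero_iff.mp hby]
  | succ n ih =>
    -- push `ub` one step towards `xy` by completing a square `u'ubt`
    obtain ⟨u', huu', hu'x⟩ := exists_adj_dist_eq_of_dist_eq_add_one hn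
    have huy := hG.dist_eq_add_one_of_mem_halfspaceW hxy hu
    have hbx := hG.dist_eq_add_one_of_mem_halfspaceW hxy.symm hb
    have hby : G.dist b y = n + 1 := by
      rcases hG.dist_eq_add_one_or_of_adj' hub x with h | h <;>
        rcases hG.dist_eq_add_one_or_of_adj' hub y with h' | h' <;> omega
    have hu'y : G.dist u' y = n + 1 := by
      have := hxy.dist_le_add_one u'
      rcases hG.dist_eq_add_one_or_of_adj' huu' y with h | h <;> omega
    have hu'b : u' ≠ b := by rintro rfl; omega
    obtain ⟨t, hu't, hbt, hty⟩ :=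
      hG.exists_adj_adj_dist_lt hu'b huu'.symm hub.symm (hu'y.trans hby.symm)
    have htx : G.dist t x = n + 1 := by
      rcases hG.dist_eq_add_one_or_of_adj' hu't x with h | h <;>
        rcases hG.dist_eq_add_one_or_of_adj' hbt x with h' | h' <;> omega
    have hut : u ≠ t := by rintro rfl; omega
    have hu' : u' ∈ halfspaceW G x y := by rw [mem_halfspaceW]; omega
    have ht : t ∈ halfspaceW G y x := by rw [mem_halfspaceW]; omega
    exact (ih hu't hu' ht hu'x).trans
      (hG.halfspaceW_subset_of_square huu'.symm hub hbt hu't.symm hu'b hut)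

lemma gConvex_halfspaceW (hG : MedianGraph G) {x y : V} (hxy : G.Adj x y) :
    GConvex G (halfspaceW G x y) := by
  intro u hu v hv z hz
  by_contra hzW
  obtain ⟨p, q, hpq, hp, hq, hpqz⟩ := hG.1.exists_adj_mem_not_mem hu hzW
  have hvq := hG.dist_eq_add_one_of_mem_halfspaceW hpq
    (hG.halfspaceW_subset hxy hpq hp (hG.mem_halfspaceW_swap hxy hq) hv)
  have := hG.1.dist_triangle (u := u) (v := p) (w := v)
  have := hG.1.dist_triangle (u := v) (v := z) (w := q)
  have := G.dist_comm (u := p) (v := v)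
  have := G.dist_comm (u := z) (v := v)
  have := G.dist_comm (u := z) (v := q)
  simp only [gInterval, mem_ofPred_eq] at hz
  omega

end MedianGraph

section Gated

variable {V : Type*} {G : SimpleGraph V} {S : Set V}

lemma IsGate.eq (hc : G.Connected) {v g g' : V} (h : IsGate G S v g) (h' : IsGate G S v g') :
    g = g' := by
  have := h.2 g' h'.1
  have := h'.2 g h.1
  have := G.dist_comm (u := g) (v := g')
  exact hc.dist_eq_zero_iff.mp (by omega)

lemma Gated.gConvex (hc : G.Connected) (hS : Gated G S) : GConvex G S := by
  intro a ha b hb w hw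
  obtain ⟨g, hg, hgd⟩ := hS w
  have := hgd a ha
  have := hgd b hb
  have := hc.dist_triangle (u := a) (v := g) (w := b)
  have := G.dist_comm (u := w) (v := a)
  have := G.dist_comm (u := g) (v := a)
  simp only [gInterval, mem_ofPred_eq] at hw
  rwa [hc.dist_eq_zero_iff.mp (show G.dist w g = 0 by omega)]

/-- A point `g ∈ S` nearest to `v` is its gate: the median of `v`, `g` and any `u ∈ S` lies in
`S ∩ I(v,g)`, hence is `g`. -/
lemma GConvex.gated (hG : MedianGraph G) (hS : GConvex G S) (hne : S.Nonempty) :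
    Gated G S := by
  intro v
  obtain ⟨g, hg, hmin⟩ := exists_minimalFor_of_wellFoundedLT (· ∈ S) (G.dist v) hne
  refine ⟨g, hg, fun u hu ↦ ?_⟩
  obtain ⟨m, h₁, h₂, h₃⟩ := hG.exists_median v g u
  have hm : m ∈ S := hS g hg u hu h₂
  have := hmin hm (by omega)
  rw [hG.1.dist_eq_zero_iff.mp (show G.dist m g = 0 by omega)] at h₃
  have := G.dist_comm (u := u) (v := g)
  have := G.dist_comm (u := u) (v := v)
  have := G.dist_comm (u := g) (v := v)
  omega

end Gated

section Fiber

variable {V : Type*} {G : SimpleGraph V} {H : Set V} {x y : V}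

lemma mem_fiber_self (hx : x ∈ H) : x ∈ fiber G H x :=
  ⟨hx, fun u _ ↦ by rw [dist_self, zero_add]⟩

lemma fiber_subset_halfspaceW (hy : y ∈ H) (hxy : G.Adj x y) :
    fiber G H x ⊆ halfspaceW G x y := by
  intro a ha
  rw [mem_halfspaceW, ha.2 y hy, dist_eq_one_iff_adj.mpr hxy]
  omega

/-- If the gate `g` of `z` were not `x`, the neighbour `u` of `x` towards `g` would give a
halfspace `W(x,u)` containing `F(x)` but not `z`. -/
lemma gConvex_fiber (hG : MedianGraph G) (hH : Gated G H) (hx : x ∈ H) :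
    GConvex G (fiber G H x) := by
  intro v hv w hw z hz
  obtain ⟨g, hg, hgd⟩ := hH z
  suffices g = x from this ▸ ⟨hg, hgd⟩
  by_contra hgx
  obtain ⟨n, hn⟩ : ∃ n, G.dist x g = n + 1 :=
    Nat.exists_eq_add_one.mpr (hG.1.pos_dist_of_ne (Ne.symm hgx))
  obtain ⟨u, hxu, hug⟩ := exists_adj_dist_eq_of_dist_eq_add_one hn
  have hu : u ∈ H := hH.gConvex hG.1 x hx g hg <| by
    simp only [gInterval, mem_ofPred_eq, dist_eq_one_iff_adj.mpr hxu]
    omega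
  have hzW := hG.gConvex_halfspaceW hxu v (fiber_subset_halfspaceW hu hxu hv) w
    (fiber_subset_halfspaceW hu hxu hw) hz
  rw [mem_halfspaceW, hgd x hx, hgd u hu, G.dist_comm (u := g), G.dist_comm (u := g)] at hzW
  omega

end Fiber

section Boundary

variable {V : Type*} {G : SimpleGraph V} {H : Set V} {x y : V}

lemma neighboring_iff_adj (hc : G.Connected) (hx : x ∈ H) (hy : y ∈ H) (hne : x ≠ y) :
    Neighboring G H x y ↔ G.Adj x y := by
  refine ⟨fun ⟨a, ha, b, hb, hab⟩ ↦ ?_,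
    fun h ↦ ⟨x, mem_fiber_self hx, y, mem_fiber_self hy, h⟩⟩
  have := ha.2 y hy
  have := hb.2 x hx
  have := hc.dist_triangle (u := a) (v := b) (w := y)
  have := hc.dist_triangle (u := b) (v := a) (w := x)
  have := dist_eq_one_iff_adj.mpr hab
  have := G.dist_comm (u := a) (v := b)
  have := G.dist_comm (u := x) (v := y)
  have := hc.pos_dist_of_ne hne
  exact dist_eq_one_iff_adj.mp (by omega)

lemma halfspaceW_subset_of_mem_fiber (hG : MedianGraph G) (hx : x ∈ H) (hy : y ∈ H)
    (hxy : G.Adj x y) {a b : V} (ha : a ∈ fiber G H x) (hb : b ∈ fiber G H y)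
    (hab : G.Adj a b) : halfspaceW G x y ⊆ halfspaceW G a b :=
  hG.halfspaceW_subset hxy hab (fiber_subset_halfspaceW hy hxy ha)
    (fiber_subset_halfspaceW hx hxy.symm hb)

lemma dist_eq_of_adj_of_mem_fiber (hG : MedianGraph G) (hx : x ∈ H) (hy : y ∈ H)
    (hxy : G.Adj x y) {a a' b b' : V} (ha : a ∈ fiber G H x) (ha' : a' ∈ fiber G H x)
    (hb : b ∈ fiber G H y) (hb' : b' ∈ fiber G H y) (hab : G.Adj a b) (hab' : G.Adj a' b') :
    G.dist b b' = G.dist a a' := by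
  have h₁ := hG.dist_eq_add_one_of_mem_halfspaceW hab <|
    halfspaceW_subset_of_mem_fiber hG hx hy hxy ha hb hab (fiber_subset_halfspaceW hy hxy ha')
  have h₂ := hG.dist_eq_add_one_of_mem_halfspaceW hab'.symm <|
    halfspaceW_subset_of_mem_fiber hG hy hx hxy.symm hb' ha' hab'.symm
      (fiber_subset_halfspaceW hx hxy.symm hb)
  have := G.dist_comm (u := a') (v := b)
  have := G.dist_comm (u := a') (v := a)
  omega

/-- For `z` between `a, a' ∈ ∂_y F(x)` with neighbours `b, b' ∈ F(y)`, the median of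
`z, b, b'` is a neighbour of `z` in `F(y)`. -/
lemma gConvex_bdry (hG : MedianGraph G) (hH : Gated G H) (hx : x ∈ H) (hy : y ∈ H)
    (hxy : G.Adj x y) : GConvex G (bdry G H x y) := by
  rintro a ⟨ha, b, hb, hab⟩ a' ⟨ha', b', hb', hab'⟩ z hz
  have hzF : z ∈ fiber G H x := gConvex_fiber hG hH hx a ha a' ha' hz
  have hzW := fiber_subset_halfspaceW hy hxy hzF
  have hzb := hG.dist_eq_add_one_of_mem_halfspaceW hab <|
    halfspaceW_subset_of_mem_fiber hG hx hy hxy ha hb hab hzW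
  have hzb' := hG.dist_eq_add_one_of_mem_halfspaceW hab' <|
    halfspaceW_subset_of_mem_fiber hG hx hy hxy ha' hb' hab' hzW
  have hbb' := dist_eq_of_adj_of_mem_fiber hG hx hy hxy ha ha' hb hb' hab hab'
  obtain ⟨m, h₁, h₂, h₃⟩ := hG.exists_median z b b'
  refine ⟨hzF, m, gConvex_fiber hG hH hy b hb b' hb' h₂, dist_eq_one_iff_adj.mp ?_⟩
  simp only [gInterval, mem_ofPred_eq] at hz
  have := G.dist_comm (u := a) (v := z)
  have := G.dist_comm (u := b') (v := z)
  have := G.dist_comm (u := m) (v := z)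
  have := G.dist_comm (u := m) (v := b)
  have := G.dist_comm (u := m) (v := b')
  omega

end Boundary

namespace Finset

variable {d : ℕ}

def preimageCastSucc (S : Finset (Fin (d + 1))) : Finset (Fin d) :=
  {i | i.castSucc ∈ S}

@[simp]
lemma mem_preimageCastSucc {S : Finset (Fin (d + 1))} {i : Fin d} :
    i ∈ S.preimageCastSucc ↔ i.castSucc ∈ S := by
  simp [preimageCastSucc]

lemma preimageCastSucc_symmDiff (S T : Finset (Fin (d + 1))) :
    (symmDiff S T).preimageCastSucc = symmDiff S.preimageCastSucc T.preimageCastSucc := by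
  ext i
  simp only [mem_preimageCastSucc, mem_symmDiff]

lemma card_eq_card_preimageCastSucc_add (S : Finset (Fin (d + 1))) :
    #S = #S.preimageCastSucc + if Fin.last d ∈ S then 1 else 0 := by
  have : S.preimageCastSucc.map Fin.castSuccEmb = S.erase (Fin.last d) := by
    ext j
    rcases Fin.eq_castSucc_or_eq_last j with ⟨i, rfl⟩ | rfl
    · simp [(Fin.castSucc_lt_last i).ne]
    · simp [Fin.castSucc_ne_last]
  rw [← card_map (s := S.preimageCastSucc) Fin.castSuccEmb, this]
  split_ifs with h
  · exact (card_erase_add_one h).symm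
  · rw [erase_eq_of_notMem h, add_zero]

lemma eq_of_preimageCastSucc_eq {S T : Finset (Fin (d + 1))}
    (hlast : Fin.last d ∈ S ↔ Fin.last d ∈ T) (h : S.preimageCastSucc = T.preimageCastSucc) :
    S = T := by
  ext j
  rcases Fin.eq_castSucc_or_eq_last j with ⟨i, rfl⟩ | rfl
  · rw [← mem_preimageCastSucc, ← mem_preimageCastSucc, h]
  · exact hlast

end Finset

lemma hasInducedCube_succ {V : Type*} {G : SimpleGraph V} {d : ℕ}
    {f g : Finset (Fin d) → V} (hf : Function.Injective f) (hg : Function.Injective g)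
    (hfg : ∀ A B, f A ≠ g B) (hfadj : ∀ A B, G.Adj (f A) (f B) ↔ (symmDiff A B).card = 1)
    (hgadj : ∀ A B, G.Adj (g A) (g B) ↔ (symmDiff A B).card = 1)
    (hcross : ∀ A B, G.Adj (f A) (g B) ↔ A = B) : HasInducedCube G (d + 1) := by
  refine ⟨fun S ↦ if Fin.last d ∈ S then g S.preimageCastSucc else f S.preimageCastSucc,
    fun S T h ↦ ?_, fun _ ↦ mem_univ _, fun S T ↦ ?_⟩
  · by_cases hS : Fin.last d ∈ S <;> by_cases hT : Fin.last d ∈ T <;>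
      simp only [hS, hT, if_true, if_false] at h
    · exact Finset.eq_of_preimageCastSucc_eq (iff_of_true hS hT) (hg h)
    · exact absurd h.symm (hfg _ _)
    · exact absurd h (hfg _ _)
    · exact Finset.eq_of_preimageCastSucc_eq (iff_of_false hS hT) (hf h)
  · rw [Finset.card_eq_card_preimageCastSucc_add, Finset.preimageCastSucc_symmDiff]
    by_cases hS : Fin.last d ∈ S <;> by_cases hT : Fin.last d ∈ T <;>
      simp [hS, hT, hfadj, hgadj, hcross, G.adj_comm (g _), Finset.mem_symmDiff,
        eq_comm (a := T.preimageCastSucc)]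

/-- A cube in `∂_y F(x)`, together with the neighbours of its vertices in `F(y)`, spans a cube
of one more dimension. -/
lemma hasInducedCube_succ_of_hasCubeIn_bdry {V : Type*} {G : SimpleGraph V} {H : Set V}
    {x y : V} (hG : MedianGraph G) (hx : x ∈ H) (hy : y ∈ H) (hxy : G.Adj x y) {d : ℕ}
    (hcube : HasCubeIn G d (bdry G H x y)) : HasInducedCube G (d + 1) := by
  obtain ⟨f, hf, hfB, hfadj⟩ := hcube
  choose g hgF hfg using fun A ↦ (hfB A).2
  have hdist : ∀ A B, G.dist (g A) (g B) = G.dist (f A) (f B) := fun A B ↦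
    dist_eq_of_adj_of_mem_fiber hG hx hy hxy (hfB A).1 (hfB B).1 (hgF A) (hgF B) (hfg A) (hfg B)
  have hcross : ∀ A B, G.Adj (f A) (g B) ↔ A = B := by
    refine fun A B ↦ ⟨fun h ↦ hf ?_, fun h ↦ by subst h; exact hfg A⟩
    have := dist_eq_of_adj_of_mem_fiber hG hx hy hxy (hfB A).1 (hfB B).1 (hgF B) (hgF B) h (hfg B)
    exact hG.1.dist_eq_zero_iff.mp (by rw [← this, dist_self])
  refine hasInducedCube_succ hf (fun A B (h : g A = g B) ↦ (hcross A B).1 (h ▸ hfg A))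
    (fun A B h ↦ hxy.ne ((hfB A).1.eq hG.1 (h ▸ hgF B))) hfadj (fun A B ↦ ?_) hcross
  rw [← dist_eq_one_iff_adj, hdist, dist_eq_one_iff_adj, hfadj]

theorem boundary_gated_dim_general {V : Type*} (G : SimpleGraph V) (hG : MedianGraph G)
    (d : ℕ) (hmax : ∀ d' : ℕ, HasInducedCube G d' → d' ≤ d)
    (H : Set V) (hH : Gated G H) (x y : V) (hx : x ∈ H) (hy : y ∈ H) (hxy : x ≠ y) :
    (Neighboring G H x y ↔ G.Adj x y) ∧
    (Neighboring G H x y →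
      Gated G (bdry G H x y) ∧ ¬ HasCubeIn G d (bdry G H x y)) := by
  have hiff := neighboring_iff_adj hG.1 hx hy hxy
  refine ⟨hiff, fun hnb ↦ ?_⟩
  have hadj := hiff.mp hnb
  obtain ⟨a, ha, b, hb, hab⟩ := hnb
  refine ⟨(gConvex_bdry hG hH hx hy hadj).gated hG ⟨a, ha, b, hb, hab⟩, fun hcube ↦ ?_⟩
  have := hmax _ (hasInducedCube_succ_of_hasCubeIn_bdry hG hx hy hadj hcube)
  omega

/-- Fibers `F(x)` and `F(y)` of a gated set `H` in a median graph of dimension `d`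
are neighboring iff `x ∼ y`; moreover, the boundary `∂_y F(x)` of neighboring fibers
is gated and contains no induced `d`-dimensional hypercube. -/
theorem boundary_gated_dim {V : Type*} (G : SimpleGraph V) (hG : MedianGraph G)
    (d : ℕ) (hd : HasInducedCube G d) (hmax : ∀ d' : ℕ, HasInducedCube G d' → d' ≤ d)
    (H : Set V) (hH : Gated G H) (x y : V) (hx : x ∈ H) (hy : y ∈ H) (hxy : x ≠ y) :
    (Neighboring G H x y ↔ G.Adj x y) ∧
    (Neighboring G H x y →
      Gated G (bdry G H x y) ∧ ¬ HasCubeIn G d (bdry G H x y)) :=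
  boundary_gated_dim_general G hG d hmax H hH x y hx hy hxy
end

section
/- Let H be a gated set of vertices of a median graph G of dimension d. Then for every x ∈ H, the total boundary ∂*F(x) of the fiber F(x) contains no induced d-dimensional hypercube of G. -/
open SimpleGraph Set

open scoped Finset

/-! Distances to `x` change by one along every edge of a median graph and are affine on
every induced square, hence affine on an induced cube: the cube has a top vertex, farthest
from `x`, from which every other vertex is reached by edges descending towards `x`. If the
top vertex lies in `∂_y F(x)`, the quadrangle condition pushes its neighbor in `F(y)` down
these edges, so the whole cube lies in `∂_y F(x)`. Each vertex of `F(x)` has at most one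
neighbor in `F(y)`, and these neighbors span a second copy of the cube; the two copies
together form an induced `Q_{d+1}`, contradicting the dimension. -/

section

variable {V : Type*} {G : SimpleGraph V}

theorem mem_gInterval {u v w : V} :
    w ∈ gInterval G u v ↔ G.dist u w + G.dist w v = G.dist u v :=
  Iff.rfl

namespace MedianGraph

theorem dist_adj_cases (hG : MedianGraph G) {v w : V} (hvw : G.Adj v w) (z : V) :
    G.dist v z = G.dist w z + 1 ∨ G.dist w z = G.dist v z + 1 := by
  have hvw' : G.dist v w = 1 := dist_eq_one_iff_adj.mpr hvw
  have hwv : G.dist w v = 1 := dist_eq_one_iff_adj.mpr hvw.symm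
  have t1 : G.dist v z ≤ G.dist v w + G.dist w z := hG.1.dist_triangle
  have t2 : G.dist w z ≤ G.dist w v + G.dist v z := hG.1.dist_triangle
  suffices G.dist v z ≠ G.dist w z by omega
  intro he
  -- the median of `v`, `w`, `z` lies on the edge `vw`
  obtain ⟨m, ⟨e1, e2, e3⟩, -⟩ := hG.2 v w z
  rw [mem_gInterval] at e1 e2 e3
  rcases (by omega : G.dist v m = 0 ∨ G.dist m w = 0) with h | h
  · obtain rfl := hG.1.dist_eq_zero_iff.mp h
    omega
  · obtain rfl := hG.1.dist_eq_zero_iff.mp h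
    have c1 : G.dist z m = G.dist m z := dist_comm
    have c2 : G.dist z v = G.dist v z := dist_comm
    omega

theorem dist_eq_two_of_adj_of_adj (hG : MedianGraph G) {v w₁ w₂ : V} (h₁ : G.Adj v w₁)
    (h₂ : G.Adj v w₂) (hne : w₁ ≠ w₂) : G.dist w₁ w₂ = 2 := by
  have d₁ : G.dist w₁ v = 1 := dist_eq_one_iff_adj.mpr h₁.symm
  have d₂ : G.dist w₂ v = 1 := dist_eq_one_iff_adj.mpr h₂.symm
  have hna : ¬ G.Adj w₁ w₂ := fun h => by have := hG.dist_adj_cases h v; omega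
  have t : G.dist w₁ w₂ ≤ G.dist w₁ v + G.dist v w₂ := hG.1.dist_triangle
  have h0 : G.dist w₁ w₂ ≠ 0 := fun h => hne (hG.1.dist_eq_zero_iff.mp h)
  have h1 : G.dist w₁ w₂ ≠ 1 := fun h => hna (dist_eq_one_iff_adj.mp h)
  rw [dist_comm] at d₂
  omega

theorem quadrangle (hG : MedianGraph G) {z v w₁ w₂ : V} (h₁ : G.Adj v w₁) (h₂ : G.Adj v w₂)
    (hne : w₁ ≠ w₂) (d₁ : G.dist w₁ z + 1 = G.dist v z) (d₂ : G.dist w₂ z + 1 = G.dist v z) :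
    ∃ t, G.Adj t w₁ ∧ G.Adj t w₂ ∧ G.dist t z + 2 = G.dist v z := by
  have h12 : G.dist w₁ w₂ = 2 := hG.dist_eq_two_of_adj_of_adj h₁ h₂ hne
  have h21 : G.dist w₂ w₁ = 2 := by rw [dist_comm, h12]
  have c1 : G.dist z w₁ = G.dist w₁ z := dist_comm
  have c2 : G.dist z w₂ = G.dist w₂ z := dist_comm
  -- the median of `w₁`, `w₂`, `z` is the fourth vertex of the square
  obtain ⟨m, ⟨e1, e2, e3⟩, -⟩ := hG.2 w₁ w₂ z
  rw [mem_gInterval] at e1 e2 e3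
  have c3 : G.dist z m = G.dist m z := dist_comm
  have hm1 : G.dist w₁ m ≠ 0 := fun h => by
    obtain rfl := hG.1.dist_eq_zero_iff.mp h
    omega
  have hm2 : G.dist m w₂ ≠ 0 := fun h => by
    obtain rfl := hG.1.dist_eq_zero_iff.mp h
    omega
  have a1 : G.Adj w₁ m := dist_eq_one_iff_adj.mp (by omega)
  have a2 : G.Adj m w₂ := dist_eq_one_iff_adj.mp (by omega)
  have c4 : G.dist m w₁ = 1 := dist_eq_one_iff_adj.mpr a1.symm
  exact ⟨m, a1.symm, a2, by omega⟩

theorem eq_of_three_common_neighbors (hG : MedianGraph G) {p q u₁ u₂ u₃ : V}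
    (h₁ : G.Adj p u₁) (h₂ : G.Adj p u₂) (h₃ : G.Adj p u₃)
    (k₁ : G.Adj u₁ q) (k₂ : G.Adj u₂ q) (k₃ : G.Adj u₃ q)
    (n₁₂ : u₁ ≠ u₂) (n₁₃ : u₁ ≠ u₃) (n₂₃ : u₂ ≠ u₃) : p = q := by
  have d₁₂ := hG.dist_eq_two_of_adj_of_adj h₁ h₂ n₁₂
  have d₂₃ := hG.dist_eq_two_of_adj_of_adj h₂ h₃ n₂₃
  have d₃₁ := hG.dist_eq_two_of_adj_of_adj h₃ h₁ n₁₃.symm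
  have dp : ∀ {a b : V}, G.Adj a b → G.dist a b = 1 := dist_eq_one_iff_adj.mpr
  obtain ⟨m, -, hm⟩ := hG.2 u₁ u₂ u₃
  have hp : p ∈ gInterval G u₁ u₂ ∧ p ∈ gInterval G u₂ u₃ ∧ p ∈ gInterval G u₃ u₁ := by
    simp only [mem_gInterval, dp h₁.symm, dp h₂.symm, dp h₃.symm, dp h₁, dp h₂, dp h₃, d₁₂, d₂₃,
      d₃₁, and_self]
  have hq : q ∈ gInterval G u₁ u₂ ∧ q ∈ gInterval G u₂ u₃ ∧ q ∈ gInterval G u₃ u₁ := by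
    simp only [mem_gInterval, dp k₁.symm, dp k₂.symm, dp k₃.symm, dp k₁, dp k₂, dp k₃, d₁₂, d₂₃,
      d₃₁, and_self]
  exact (hm p hp).trans (hm q hq).symm

theorem dist_add_dist_of_square (hG : MedianGraph G) {p q r s : V} (z : V)
    (hpq : G.Adj p q) (hqr : G.Adj q r) (hrs : G.Adj r s) (hsp : G.Adj s p)
    (hpr : p ≠ r) (hqs : q ≠ s) :
    G.dist p z + G.dist r z = G.dist q z + G.dist s z := by
  have a1 := hG.dist_adj_cases hpq z
  have a2 := hG.dist_adj_cases hqr z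
  have a3 := hG.dist_adj_cases hrs z
  have a4 := hG.dist_adj_cases hsp z
  -- otherwise a diagonal pair lies above the other one, and the quadrangle condition
  -- produces a third common neighbor of that lower pair
  suffices ¬ (G.dist p z = G.dist r z ∧ G.dist q z = G.dist s z) by omega
  rintro ⟨e1, e2⟩
  rcases a1 with h | h
  · obtain ⟨t, tq, ts, ht⟩ := hG.quadrangle (z := z) hpq hsp.symm hqs (by omega) (by omega)
    exact hqs <| hG.eq_of_three_common_neighbors hpq.symm hqr tq.symm hsp.symm hrs ts hpr
      (by rintro rfl; omega) (by rintro rfl; omega)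
  · obtain ⟨t, tp, tr, ht⟩ := hG.quadrangle (z := z) hpq.symm hqr hpr (by omega) (by omega)
    exact hpr <| hG.eq_of_three_common_neighbors hpq hsp.symm tp.symm hqr hrs.symm tr hqs
      (by rintro rfl; omega) (by rintro rfl; omega)

end MedianGraph

def IsInducedCube (G : SimpleGraph V) {d : ℕ} (f : Finset (Fin d) → V) : Prop :=
  Function.Injective f ∧ ∀ A B, G.Adj (f A) (f B) ↔ #(symmDiff A B) = 1

namespace IsInducedCube

variable {d : ℕ} {f : Finset (Fin d) → V}

theorem adj_insert (hf : IsInducedCube G f) {A : Finset (Fin d)} {i : Fin d} (hi : i ∉ A) :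
    G.Adj (f A) (f (insert i A)) := by
  rw [hf.2, symmDiff_of_le (Finset.subset_insert i A), Finset.insert_sdiff_cancel hi,
    Finset.card_singleton]

theorem dist_insert_eq_iff (hG : MedianGraph G) (hf : IsInducedCube G f) (z : V)
    {A : Finset (Fin d)} {i : Fin d} (hi : i ∉ A) :
    G.dist (f (insert i A)) z = G.dist (f A) z + 1 ↔
      G.dist (f {i}) z = G.dist (f ∅) z + 1 := by
  induction A using Finset.induction_on with
  | empty => rfl
  | @insert j A hj ih =>
    obtain ⟨hij, hiA⟩ : i ≠ j ∧ i ∉ A := by simpa only [Finset.mem_insert, not_or] using hi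
    have hji : j ∉ insert i A := by simp [Ne.symm hij, hj]
    have hcomm : insert i (insert j A) = insert j (insert i A) := Finset.insert_comm i j A
    have e₁ := hf.adj_insert hiA
    have e₂ := hf.adj_insert hji
    have e₃ := hf.adj_insert hi
    have e₄ := hf.adj_insert hj
    rw [← hcomm] at e₂
    have hne₁ : f A ≠ f (insert i (insert j A)) := fun h =>
      hiA (by rw [hf.1 h]; exact Finset.mem_insert_self _ _)
    have hne₂ : f (insert i A) ≠ f (insert j A) := fun h => by
      have := congrArg (i ∈ ·) (hf.1 h)
      simp [hij, hiA] at this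
    have hsq := hG.dist_add_dist_of_square z e₁ e₂ e₃.symm e₄.symm hne₁ hne₂
    have c₁ := hG.dist_adj_cases e₁ z
    have c₂ := hG.dist_adj_cases e₂ z
    have c₃ := hG.dist_adj_cases e₃ z
    have c₄ := hG.dist_adj_cases e₄ z
    rw [← ih hiA]
    omega

theorem exists_top (hG : MedianGraph G) (hf : IsInducedCube G f) (z : V) :
    ∃ T : Finset (Fin d), ∀ A ≠ T, ∃ B, G.Adj (f A) (f B) ∧
      G.dist (f A) z + 1 = G.dist (f B) z ∧ #(symmDiff T B) < #(symmDiff T A) := by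
  classical
  let T : Finset (Fin d) := {i | G.dist (f {i}) z = G.dist (f ∅) z + 1}
  refine ⟨T, fun A hA => ?_⟩
  obtain ⟨i, hi⟩ : (symmDiff T A).Nonempty := by
    rw [Finset.nonempty_iff_ne_empty, Ne, ← Finset.bot_eq_empty, symmDiff_eq_bot]
    exact hA.symm
  have hlt : #((symmDiff T A).erase i) < #(symmDiff T A) := Finset.card_erase_lt_of_mem hi
  rcases Finset.mem_symmDiff.mp hi with ⟨hiT, hiA⟩ | ⟨hiA, hiT⟩
  · refine ⟨insert i A, hf.adj_insert hiA, ?_, ?_⟩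
    · rw [(hf.dist_insert_eq_iff hG z hiA).mpr (Finset.mem_filter.mp hiT).2]
    · convert hlt using 2
      ext a
      by_cases ha : a = i <;> simp [ha, hiT, hiA, Finset.mem_symmDiff]
  · obtain ⟨B, hiB, rfl⟩ : ∃ B, i ∉ B ∧ A = insert i B :=
      ⟨A.erase i, Finset.notMem_erase i A, (Finset.insert_erase hiA).symm⟩
    have hdown : ¬ G.dist (f {i}) z = G.dist (f ∅) z + 1 := fun h =>
      hiT (Finset.mem_filter.mpr ⟨Finset.mem_univ i, h⟩)
    refine ⟨B, (hf.adj_insert hiB).symm, ?_, ?_⟩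
    · have := hG.dist_adj_cases (hf.adj_insert hiB) z
      have := mt (hf.dist_insert_eq_iff hG z hiB).mp hdown
      omega
    · convert hlt using 2
      ext a
      by_cases ha : a = i <;> simp [ha, hiT, hiB, Finset.mem_symmDiff]

end IsInducedCube

section Prism

variable {d : ℕ}

def succPreimage (S : Finset (Fin (d + 1))) : Finset (Fin d) :=
  {i | i.succ ∈ S}

theorem mem_succPreimage {S : Finset (Fin (d + 1))} {i : Fin d} :
    i ∈ succPreimage S ↔ i.succ ∈ S := by
  simp [succPreimage]

theorem succPreimage_symmDiff (A B : Finset (Fin (d + 1))) :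
    succPreimage (symmDiff A B) = symmDiff (succPreimage A) (succPreimage B) := by
  ext i
  simp only [mem_succPreimage, Finset.mem_symmDiff]

theorem card_eq_ite_add_card_succPreimage (S : Finset (Fin (d + 1))) :
    #S = (if 0 ∈ S then 1 else 0) + #(succPreimage S) := by
  simpa [succPreimage] using Fin.card_filter_univ_succ' (· ∈ S)

theorem eq_of_succPreimage_eq {A B : Finset (Fin (d + 1))}
    (h : succPreimage A = succPreimage B) (h₀ : 0 ∈ A ↔ 0 ∈ B) : A = B := by
  ext a
  cases a using Fin.cases with
  | zero => exact h₀
  | succ i => rw [← mem_succPreimage, h, mem_succPreimage]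

theorem IsInducedCube.hasInducedCube_succ {f p : Finset (Fin d) → V}
    (hf : IsInducedCube G f) (hp : IsInducedCube G p)
    (hfp : ∀ A B, G.Adj (f A) (p B) ↔ A = B) (hne : ∀ A B, f A ≠ p B) :
    HasInducedCube G (d + 1) := by
  classical
  let g : Finset (Fin (d + 1)) → V := fun S =>
    if 0 ∈ S then p (succPreimage S) else f (succPreimage S)
  refine ⟨g, fun A B hAB => ?_, fun _ => Set.mem_univ _, fun A B => ?_⟩
  · by_cases hA : 0 ∈ A <;> by_cases hB : 0 ∈ B <;>
      simp only [g, hA, hB, if_true, if_false] at hAB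
    · exact eq_of_succPreimage_eq (hp.1 hAB) (iff_of_true hA hB)
    · exact absurd hAB.symm (hne _ _)
    · exact absurd hAB (hne _ _)
    · exact eq_of_succPreimage_eq (hf.1 hAB) (iff_of_false hA hB)
  · rw [card_eq_ite_add_card_succPreimage, succPreimage_symmDiff]
    by_cases hA : 0 ∈ A <;> by_cases hB : 0 ∈ B <;>
      simp [g, hA, hB, hp.2, hf.2, hfp, G.adj_comm (p _), Finset.mem_symmDiff,
        Finset.card_eq_zero, eq_comm]

end Prism

section Fibers

variable {H : Set V} {x y : V}

theorem mem_totalBdry {a : V} :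
    a ∈ totalBdry G H x ↔ ∃ y, (y ∈ H ∧ G.Adj x y) ∧ a ∈ bdry G H x y := by
  simp only [totalBdry, Set.mem_iUnion, exists_prop]

theorem totalBdry_subset_fiber : totalBdry G H x ⊆ fiber G H x := fun _ ha =>
  (mem_totalBdry.mp ha).elim fun _ h => h.2.1

theorem disjoint_fiber (hG : G.Connected) (hx : x ∈ H) (hy : y ∈ H) (hxy : x ≠ y) :
    Disjoint (fiber G H x) (fiber G H y) := by
  refine Set.disjoint_left.mpr fun w hwx hwy => hxy ?_
  have e₁ : G.dist w y = G.dist w x + G.dist x y := hwx.2 y hy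
  have e₂ : G.dist w x = G.dist w y + G.dist y x := hwy.2 x hx
  have c : G.dist y x = G.dist x y := dist_comm
  exact hG.dist_eq_zero_iff.mp (by omega)

theorem dist_of_adj_of_mem_fiber (hG : G.Connected) (hx : x ∈ H) (hy : y ∈ H)
    (hxy : G.Adj x y) {a b : V} (ha : a ∈ fiber G H x) (hb : b ∈ fiber G H y)
    (hab : G.Adj a b) :
    G.dist b y = G.dist a x ∧ G.dist a y = G.dist a x + 1 ∧ G.dist b x = G.dist b y + 1 := by
  have dxy : G.dist x y = 1 := dist_eq_one_iff_adj.mpr hxy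
  have dyx : G.dist y x = 1 := dist_eq_one_iff_adj.mpr hxy.symm
  have dab : G.dist a b = 1 := dist_eq_one_iff_adj.mpr hab
  have dba : G.dist b a = 1 := dist_eq_one_iff_adj.mpr hab.symm
  have e₁ : G.dist a y = G.dist a x + G.dist x y := ha.2 y hy
  have e₂ : G.dist b x = G.dist b y + G.dist y x := hb.2 x hx
  have t₁ : G.dist a y ≤ G.dist a b + G.dist b y := hG.dist_triangle
  have t₂ : G.dist b x ≤ G.dist b a + G.dist a x := hG.dist_triangle
  omega

theorem mem_fiber_of_adj (hG : G.Connected) (hx : x ∈ H) {c s : V}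
    (hc : c ∈ fiber G H x) (hcs : G.Adj c s) (hd : G.dist s x + 1 = G.dist c x) :
    s ∈ fiber G H x := by
  refine ⟨hx, fun u hu => ?_⟩
  have e : G.dist c u = G.dist c x + G.dist x u := hc.2 u hu
  have t₁ : G.dist c u ≤ G.dist c s + G.dist s u := hG.dist_triangle
  have t₂ : G.dist s u ≤ G.dist s x + G.dist x u := hG.dist_triangle
  have dcs : G.dist c s = 1 := dist_eq_one_iff_adj.mpr hcs
  omega

theorem eq_of_adj_of_mem_fiber (hG : MedianGraph G) (hx : x ∈ H) (hy : y ∈ H)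
    (hxy : G.Adj x y) {w t₁ t₂ : V} (hw : w ∈ fiber G H x)
    (ht₁ : t₁ ∈ fiber G H y) (ht₂ : t₂ ∈ fiber G H y)
    (a₁ : G.Adj w t₁) (a₂ : G.Adj w t₂) : t₁ = t₂ := by
  by_contra hne
  obtain ⟨c₁₁, c₁₂, c₁₃⟩ := dist_of_adj_of_mem_fiber hG.1 hx hy hxy hw ht₁ a₁
  obtain ⟨c₂₁, -, c₂₃⟩ := dist_of_adj_of_mem_fiber hG.1 hx hy hxy hw ht₂ a₂
  obtain ⟨m, m₁, m₂, hm⟩ := hG.quadrangle (z := y) a₁ a₂ hne (by omega) (by omega)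
  -- `w` and `m` are both medians of `t₁`, `t₂`, `x`, yet `m` is closer to `y`
  have dp : ∀ {u v : V}, G.Adj u v → G.dist u v = 1 := dist_eq_one_iff_adj.mpr
  have d₁₂ : G.dist t₁ t₂ = 2 := hG.dist_eq_two_of_adj_of_adj a₁ a₂ hne
  have dmx : G.dist m x = G.dist w x := by
    have u₁ : G.dist m x ≤ G.dist m y + G.dist y x := hG.1.dist_triangle
    have u₂ : G.dist t₁ x ≤ G.dist t₁ m + G.dist m x := hG.1.dist_triangle
    have u₃ := dp m₁.symm
    have u₄ := dp hxy.symm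
    omega
  have c₁ : G.dist x w = G.dist w x := dist_comm
  have c₂ : G.dist x m = G.dist m x := dist_comm
  have c₃ : G.dist x t₁ = G.dist t₁ x := dist_comm
  obtain ⟨μ, -, hμ⟩ := hG.2 t₁ t₂ x
  have hwμ := hμ w ⟨by rw [mem_gInterval, dp a₁.symm, dp a₂, d₁₂],
    by rw [mem_gInterval, dp a₂.symm]; omega, by rw [mem_gInterval, dp a₁]; omega⟩
  have hmμ := hμ m ⟨by rw [mem_gInterval, dp m₁.symm, dp m₂, d₁₂],
    by rw [mem_gInterval, dp m₂.symm]; omega, by rw [mem_gInterval, dp m₁]; omega⟩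
  obtain rfl : w = m := hwμ.trans hmμ.symm
  omega

theorem exists_adj_mem_fiber_of_adj (hG : MedianGraph G) (hx : x ∈ H) (hy : y ∈ H)
    (hxy : G.Adj x y) {v w v' : V} (hv : v ∈ fiber G H x) (hw : w ∈ fiber G H x)
    (hvw : G.Adj v w) (hd : G.dist w x + 1 = G.dist v x)
    (hv' : v' ∈ fiber G H y) (hvv' : G.Adj v v') :
    ∃ t ∈ fiber G H y, G.Adj w t ∧ G.Adj t v' := by
  obtain ⟨c₁, c₂, c₃⟩ := dist_of_adj_of_mem_fiber hG.1 hx hy hxy hv hv' hvv'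
  have dxy : G.dist x y = 1 := dist_eq_one_iff_adj.mpr hxy
  have dwy : G.dist w y = G.dist w x + G.dist x y := hw.2 y hy
  have hne : w ≠ v' := fun h =>
    (disjoint_fiber hG.1 hx hy hxy.ne).notMem_of_mem_left hw (h ▸ hv')
  obtain ⟨t, tw, tv', ht⟩ := hG.quadrangle (z := y) hvw hvv' hne (by omega) (by omega)
  exact ⟨t, mem_fiber_of_adj hG.1 hy hv' tv'.symm (by omega), tw.symm, tv'⟩

theorem adj_of_adj_of_mem_fiber (hG : MedianGraph G) (hx : x ∈ H) (hy : y ∈ H)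
    (hxy : G.Adj x y) {a b a' b' : V} (ha : a ∈ fiber G H x) (hb : b ∈ fiber G H x)
    (ha' : a' ∈ fiber G H y) (hb' : b' ∈ fiber G H y) (haa' : G.Adj a a') (hbb' : G.Adj b b')
    (hab : G.Adj a b) : G.Adj a' b' := by
  wlog hd : G.dist b x + 1 = G.dist a x generalizing a b a' b'
  · have hd' := hG.dist_adj_cases hab x
    exact (this hb ha hb' ha' hbb' haa' hab.symm (by omega)).symm
  obtain ⟨t, ht, hbt, hta'⟩ := exists_adj_mem_fiber_of_adj hG hx hy hxy ha hb hab hd ha' haa'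
  rwa [← eq_of_adj_of_mem_fiber hG hx hy hxy hb ht hb' hbt hbb', adj_comm]

theorem adj_iff_adj_of_mem_fiber (hG : MedianGraph G) (hx : x ∈ H) (hy : y ∈ H)
    (hxy : G.Adj x y) {a b a' b' : V} (ha : a ∈ fiber G H x) (hb : b ∈ fiber G H x)
    (ha' : a' ∈ fiber G H y) (hb' : b' ∈ fiber G H y) (haa' : G.Adj a a')
    (hbb' : G.Adj b b') : G.Adj a b ↔ G.Adj a' b' :=
  ⟨adj_of_adj_of_mem_fiber hG hx hy hxy ha hb ha' hb' haa' hbb',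
    adj_of_adj_of_mem_fiber hG hy hx hxy.symm ha' hb' ha hb haa'.symm hbb'.symm⟩

end Fibers

theorem IsInducedCube.exists_forall_mem_bdry {H : Set V} {x : V} {d : ℕ}
    {f : Finset (Fin d) → V} (hG : MedianGraph G) (hx : x ∈ H) (hf : IsInducedCube G f)
    (hbd : ∀ A, f A ∈ totalBdry G H x) :
    ∃ y ∈ H, G.Adj x y ∧ ∀ A, f A ∈ bdry G H x y := by
  obtain ⟨T, hT⟩ := hf.exists_top hG x
  obtain ⟨y, ⟨hy, hxy⟩, hTy⟩ := mem_totalBdry.mp (hbd T)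
  have hfib : ∀ A, f A ∈ fiber G H x := fun A => totalBdry_subset_fiber (hbd A)
  refine ⟨y, hy, hxy, fun A => ?_⟩
  induction hn : #(symmDiff T A) using Nat.strong_induction_on generalizing A with
  | _ n ih =>
    rcases eq_or_ne A T with rfl | hA
    · exact hTy
    obtain ⟨B, hAB, hd, hlt⟩ := hT A hA
    obtain ⟨b, hb, hBb⟩ := (ih _ (hn ▸ hlt) B rfl).2
    obtain ⟨t, ht, hAt, -⟩ :=
      exists_adj_mem_fiber_of_adj hG hx hy hxy (hfib B) (hfib A) hAB.symm hd hb hBb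
    exact ⟨hfib A, t, ht, hAt⟩

theorem hasInducedCube_succ_of_forall_mem_bdry {H : Set V} {x y : V} {d : ℕ}
    {f : Finset (Fin d) → V} (hG : MedianGraph G) (hx : x ∈ H) (hy : y ∈ H) (hxy : G.Adj x y)
    (hf : IsInducedCube G f) (hbd : ∀ A, f A ∈ bdry G H x y) :
    HasInducedCube G (d + 1) := by
  choose p hpy hfp using fun A => (hbd A).2
  have hfx : ∀ A, f A ∈ fiber G H x := fun A => (hbd A).1
  have hmatch : ∀ A B, G.Adj (f A) (p B) ↔ A = B := fun A B =>
    ⟨fun h => hf.1 <| eq_of_adj_of_mem_fiber hG hy hx hxy.symm (hpy B) (hfx A) (hfx B) h.symm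
      (hfp B).symm, by rintro rfl; exact hfp A⟩
  have hp : IsInducedCube G p :=
    ⟨fun A B h => (hmatch A B).mp (h ▸ hfp A), fun A B =>
      (adj_iff_adj_of_mem_fiber hG hx hy hxy (hfx A) (hfx B) (hpy A) (hpy B) (hfp A)
        (hfp B)).symm.trans (hf.2 A B)⟩
  exact hf.hasInducedCube_succ hp hmatch fun A B h =>
    (disjoint_fiber hG.1 hx hy hxy.ne).notMem_of_mem_left (hfx A) (h ▸ hpy B)

end

theorem total_boundary_dim_general {V : Type*} (G : SimpleGraph V) (hG : MedianGraph G)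
    (d : ℕ) (hmax : ∀ d' : ℕ, HasInducedCube G d' → d' ≤ d)
    (H : Set V) (x : V) (hx : x ∈ H) :
    ¬ HasCubeIn G d (totalBdry G H x) := by
  rintro ⟨f, hinj, hbd, hadj⟩
  have hf : IsInducedCube G f := ⟨hinj, hadj⟩
  obtain ⟨y, hy, hxy, hfy⟩ := hf.exists_forall_mem_bdry hG hx hbd
  have := hmax (d + 1) (hasInducedCube_succ_of_forall_mem_bdry hG hx hy hxy hf hfy)
  omega

/-- In a median graph of dimension `d`, the total boundary of a fiber of a gated set
contains no induced `d`-dimensional hypercube. -/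
theorem total_boundary_dim {V : Type*} (G : SimpleGraph V) (hG : MedianGraph G)
    (d : ℕ) (hd : HasInducedCube G d) (hmax : ∀ d' : ℕ, HasInducedCube G d' → d' ≤ d)
    (H : Set V) (hH : Gated G H) (x : V) (hx : x ∈ H) :
    ¬ HasCubeIn G d (totalBdry G H x) :=
  total_boundary_dim_general G hG d hmax H x hx
end
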